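/- (MSE of the doubly robust estimator.) Fix a reward kernel D with mean reward r*(x,a) and conditional variance σ(x,a)² (both with finite second moments under P_μ after weighting by ρ), and a fixed measurable reward model r̂ : X×A → ℝ. Define the doubly robust estimator on n i.i.d. samples from P_μ^D by v̂_DR = (1/n)·Σ_{i=1}^n [ ρ(x_i,a_i)·(r_i − r̂(x_i,a_i)) + Σ_{a∈A} π(a|x_i)·r̂(x_i,a) ]. Then E[(v̂_DR − v^π(D))²] = (1/n)·( E_μ[ρ²σ²] + Var_{x∼λ}( E_{a∼μ(·|x)}[ρ(x,a)·r*(x,a)] ) + E_{x∼λ}[ Var_{a∼μ(·|x)}( ρ(x,a)·(r̂(x,a) − r*(x,a)) ) ] ). -/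

import Mathlib

open MeasureTheory ProbabilityTheory Real
open scoped ENNReal BigOperators Classical

/-- A policy assigns to each context a probability mass function over actions. -/
structure Policy (X A : Type*) [MeasurableSpace X] [Fintype A] where
  prob : X → A → ℝ
  nonneg : ∀ x a, 0 ≤ prob x a
  sum_one : ∀ x, ∑ a, prob x a = 1
  meas : ∀ a, Measurable fun x => prob x a

variable {X A : Type*} [MeasurableSpace X] [Fintype A] [Nonempty A]
  [MeasurableSpace A] [MeasurableSingletonClass A]

/-- Importance weight ρ(x,a) = π(a|x)/μ(a|x). -/
noncomputable def impW (μp πp : Policy X A) (p : X × A) : ℝ :=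
  πp.prob p.1 p.2 / μp.prob p.1 p.2

/-- E_μ[f] : expectation of f(x,a) for x ∼ λ, a ∼ μ(·|x). -/
noncomputable def Emu (lam : Measure X) (μp : Policy X A) (f : X × A → ℝ) : ℝ :=
  ∫ x, ∑ a, μp.prob x a * f (x, a) ∂lam

/-- The distribution P_μ of (x,a) with x ∼ λ, a ∼ μ(·|x). -/
noncomputable def Policy.joint (lam : Measure X) (μp : Policy X A) : Measure (X × A) :=
  lam.bind fun x => Measure.sum fun a : A => ENNReal.ofReal (μp.prob x a) • Measure.dirac (x, a)

/-- Mean reward r*(x,a) of a reward kernel. -/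
noncomputable def rstar (D : Kernel (X × A) ℝ) (p : X × A) : ℝ := ∫ r, r ∂(D p)

/-- The value of the target policy π. -/
noncomputable def vpi (lam : Measure X) (πp : Policy X A) (D : Kernel (X × A) ℝ) : ℝ :=
  ∫ x, ∑ a, πp.prob x a * rstar D (x, a) ∂lam

/-- The joint distribution P_μ^D of ((x,a),r): x ∼ λ, a ∼ μ(·|x), r ∼ D(·|x,a). -/
noncomputable def sampleMeasure (lam : Measure X) (μp : Policy X A) (D : Kernel (X × A) ℝ) :
    Measure ((X × A) × ℝ) :=
  (Policy.joint lam μp).bind fun p => (D p).map fun r => (p, r)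

/-- The class R(σ,Rmax) of reward kernels: Markov kernels with finite second moments such
that P_μ-a.s. 0 ≤ r*(x,a) ≤ Rmax(x,a) and Var(r|x,a) ≤ σ(x,a)². -/
def InRewardClass (lam : Measure X) (μp : Policy X A) (σf Rmax : X × A → ℝ)
    (D : Kernel (X × A) ℝ) : Prop :=
  IsMarkovKernel D ∧ (∀ p, Integrable (fun r => r ^ 2) (D p)) ∧
    (∀ᵐ p ∂Policy.joint lam μp,
      0 ≤ rstar D p ∧ rstar D p ≤ Rmax p ∧ variance id (D p) ≤ σf p ^ 2)

/-- Minimax risk of off-policy evaluation from n i.i.d. samples. -/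
noncomputable def minimaxRisk (lam : Measure X) (μp πp : Policy X A)
    (σf Rmax : X × A → ℝ) (n : ℕ) : ℝ≥0∞ :=
  ⨅ (vhat : (Fin n → (X × A) × ℝ) → ℝ) (_ : Measurable vhat),
    ⨆ (D : Kernel (X × A) ℝ) (_ : InRewardClass lam μp σf Rmax D),
      ∫⁻ ω, ENNReal.ofReal ((vhat ω - vpi lam πp D) ^ 2)
        ∂(Measure.pi fun _ : Fin n => sampleMeasure lam μp D)

/-- The doubly robust estimator with reward model r̂ on n samples. -/
noncomputable def drEst (μp πp : Policy X A) (rhat : X × A → ℝ) (n : ℕ)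
    (ω : Fin n → (X × A) × ℝ) : ℝ :=
  (1 / n : ℝ) * ∑ i, (impW μp πp (ω i).1 * ((ω i).2 - rhat (ω i).1)
    + ∑ a, πp.prob (ω i).1.1 a * rhat ((ω i).1.1, a))

/-! The estimator is the sample mean of `n` i.i.d. copies of the per-sample term
`f(x,a,r) = ρ(x,a) (r - r̂(x,a)) + V̂(x)` with `V̂(x) = ∑_b π(b|x) r̂(x,b)`, so its mean squared
error is `Var f / n` as soon as `E f = v^π`. Both moments of `f` are computed by disintegrating
`P_μ^D = λ ⊗ μ(·|x) ⊗ D(·|x,a)`. Given `(x,a)`, `f` is affine in `r`, with conditional mean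
`ρ (r* - r̂) + V̂(x)` and conditional variance `ρ² σ²`. Averaging over `a ∼ p = μ(·|x)` with
`p ρ = π`, the conditional mean given `x` is `∑_a π r*`, whence `E f = v^π`. For the second
moment, the identity `∑ p (c - w)² = Var_p w + (c - E_p w)²` with `w = ρ (r̂ - r*)` and
`c = V̂(x)`, where again `c - E_p w = ∑_a π r*`, produces the three terms. -/

section SampleMean

variable {Ω : Type*} [MeasurableSpace Ω] {P : Measure Ω} [IsProbabilityMeasure P]

lemma integral_sampleMean {f : Ω → ℝ} (hf : Integrable f P) {n : ℕ} (hn : n ≠ 0) :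
    ∫ ω, (1 / n : ℝ) * ∑ i, f (ω i) ∂Measure.pi (fun _ : Fin n => P) = ∫ s, f s ∂P := by
  rw [integral_const_mul, integral_finsetSum _ fun i _ => integrable_comp_eval hf]
  simp [integral_comp_eval (μ := fun _ => P) hf.aestronglyMeasurable, hn]

lemma integral_sampleMean_sub_sq {f : Ω → ℝ} (hf : MemLp f 2 P) {n : ℕ} (hn : n ≠ 0) :
    ∫ ω, ((1 / n : ℝ) * ∑ i, f (ω i) - ∫ s, f s ∂P) ^ 2 ∂Measure.pi (fun _ : Fin n => P)
      = variance f P / n := by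
  have hmean := integral_sampleMean (hf.integrable one_le_two) hn
  have hsum : (fun ω : Fin n → Ω => (1 / n : ℝ) * ∑ i, f (ω i))
      = (1 / n : ℝ) • ∑ i, fun ω : Fin n → Ω => f (ω i) := by
    ext ω
    simp
  rw [← hmean, ← variance_eq_integral, hsum, variance_smul, variance_sum_pi fun _ => hf]
  · simp
    field_simp
  · refine (Finset.aemeasurable_fun_sum _ fun i _ => ?_).const_mul _
    exact hf.aemeasurable.comp_quasiMeasurePreserving (Measure.quasiMeasurePreserving_eval _ i)

end SampleMean

section Moments

variable {Ω : Type*} [MeasurableSpace Ω] {μ : Measure Ω} [IsProbabilityMeasure μ]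

lemma integral_const_mul_add {Y : Ω → ℝ} (hY : Integrable Y μ) (c d : ℝ) :
    ∫ ω, (c * Y ω + d) ∂μ = c * ∫ ω, Y ω ∂μ + d := by
  rw [integral_add (hY.const_mul c) (integrable_const d), integral_const_mul]
  simp

lemma integral_const_mul_add_sq {Y : Ω → ℝ} (hY : MemLp Y 2 μ) (c d : ℝ) :
    ∫ ω, (c * Y ω + d) ^ 2 ∂μ = c ^ 2 * variance Y μ + (c * ∫ ω, Y ω ∂μ + d) ^ 2 := by
  have hvar :=
    variance_eq_sub (X := fun ω => c * Y ω + d) ((hY.const_mul c).add (memLp_const d))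
  rw [variance_add_const (hY.const_mul c).aestronglyMeasurable, variance_const_mul] at hvar
  simp only [Pi.pow_apply] at hvar
  rw [integral_const_mul_add (hY.integrable one_le_two)] at hvar
  linarith

end Moments

lemma Finset.sum_mul_sub_sq_eq {ι : Type*} (s : Finset ι) {p w : ι → ℝ} (hp : ∑ i ∈ s, p i = 1)
    (c : ℝ) :
    ∑ i ∈ s, p i * (c - w i) ^ 2
      = (∑ i ∈ s, p i * w i ^ 2 - (∑ i ∈ s, p i * w i) ^ 2) + (c - ∑ i ∈ s, p i * w i) ^ 2 := by
  have hexp (i : ι) : p i * (c - w i) ^ 2 = c ^ 2 * p i - 2 * c * (p i * w i) + p i * w i ^ 2 := by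
    ring
  simp_rw [hexp, Finset.sum_add_distrib, Finset.sum_sub_distrib, ← Finset.mul_sum, hp]
  ring

section ContextualBandit

variable {X A : Type*} [MeasurableSpace X] [Fintype A]

namespace Policy

lemma prob_mul_impW {μp πp : Policy X A} (habs : ∀ x a, 0 < πp.prob x a → 0 < μp.prob x a)
    (x : X) (a : A) : μp.prob x a * impW μp πp (x, a) = πp.prob x a := by
  rcases (μp.nonneg x a).eq_or_lt with hμ | hμ
  · have hπ : πp.prob x a = 0 :=
      le_antisymm (not_lt.1 fun hπ => (habs x a hπ).ne' hμ.symm) (πp.nonneg x a)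
    simp [← hμ, hπ]
  · exact mul_div_cancel₀ _ hμ.ne'

lemma sum_prob_mul_impW_mul {μp πp : Policy X A}
    (habs : ∀ x a, 0 < πp.prob x a → 0 < μp.prob x a) (x : X) (g : A → ℝ) :
    ∑ a, μp.prob x a * (impW μp πp (x, a) * g a) = ∑ a, πp.prob x a * g a := by
  simp_rw [← mul_assoc, prob_mul_impW habs]

variable [MeasurableSpace A]

noncomputable def actionKernel (μp : Policy X A) : Kernel X A where
  toFun x := ∑ a, ENNReal.ofReal (μp.prob x a) • Measure.dirac a
  measurable' := Measure.measurable_of_measurable_coe _ fun s _ => by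
    simp only [Measure.coe_finsetSum, Finset.sum_apply, Measure.smul_apply, smul_eq_mul]
    exact Finset.measurable_sum _ fun a _ =>
      (ENNReal.measurable_ofReal.comp (μp.meas a)).mul_const _

instance (μp : Policy X A) : IsMarkovKernel μp.actionKernel :=
  ⟨fun x => ⟨by
    simp [actionKernel, ← ENNReal.ofReal_sum_of_nonneg fun a _ => μp.nonneg x a, μp.sum_one]⟩⟩

lemma integral_actionKernel [MeasurableSingletonClass A] (μp : Policy X A) (x : X) (g : A → ℝ) :
    ∫ a, g a ∂μp.actionKernel x = ∑ a, μp.prob x a * g a := by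
  rw [integral_fintype .of_finite]
  simp [actionKernel, Measure.real, Pi.single_apply, μp.nonneg]

lemma joint_eq_compProd (lam : Measure X) [SFinite lam] (μp : Policy X A) :
    joint lam μp = lam ⊗ₘ μp.actionKernel := by
  rw [Measure.compProd_eq_comp_prod, joint]
  congr with x s hs
  rw [Kernel.prod_apply, Kernel.id_apply, Measure.dirac_prod,
    Measure.map_apply measurable_prodMk_left hs]
  simp [actionKernel, Measure.dirac_apply' _ hs, Measure.dirac_apply' _ (measurable_prodMk_left hs),
    Set.indicator]

instance (lam : Measure X) [SFinite lam] (μp : Policy X A) : SFinite (joint lam μp) := by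
  rw [joint_eq_compProd]
  infer_instance

lemma integral_joint [MeasurableSingletonClass A] (lam : Measure X) [SFinite lam]
    (μp : Policy X A) {g : X × A → ℝ} (hg : Integrable g (joint lam μp)) :
    ∫ p, g p ∂joint lam μp = ∫ x, ∑ a, μp.prob x a * g (x, a) ∂lam := by
  rw [joint_eq_compProd] at hg ⊢
  simp_rw [Measure.integral_compProd hg, integral_actionKernel]

end Policy

variable [MeasurableSpace A]

lemma sampleMeasure_eq_compProd (lam : Measure X) [SFinite lam] (μp : Policy X A)
    (D : Kernel (X × A) ℝ) [IsSFiniteKernel D] :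
    sampleMeasure lam μp D = Policy.joint lam μp ⊗ₘ D := by
  rw [Policy.joint_eq_compProd, Measure.compProd_eq_comp_prod _ D, sampleMeasure,
    ← Policy.joint_eq_compProd]
  congr with p : 1
  rw [Kernel.prod_apply, Kernel.id_apply, Measure.dirac_prod]

instance (lam : Measure X) [IsProbabilityMeasure lam] (μp : Policy X A)
    (D : Kernel (X × A) ℝ) [IsMarkovKernel D] :
    IsProbabilityMeasure (sampleMeasure lam μp D) := by
  rw [sampleMeasure_eq_compProd, Policy.joint_eq_compProd]
  infer_instance

lemma integral_sampleMeasure [MeasurableSingletonClass A] (lam : Measure X) [SFinite lam]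
    (μp : Policy X A) (D : Kernel (X × A) ℝ) [IsSFiniteKernel D] {f : (X × A) × ℝ → ℝ}
    (hf : Integrable f (sampleMeasure lam μp D)) :
    ∫ s, f s ∂sampleMeasure lam μp D
      = ∫ x, ∑ a, μp.prob x a * ∫ r, f ((x, a), r) ∂D (x, a) ∂lam := by
  rw [sampleMeasure_eq_compProd] at hf ⊢
  have hint : Integrable (fun p => ∫ r, f (p, r) ∂D p) (Policy.joint lam μp) := by
    rw [Measure.compProd] at hf
    simpa using hf.integral_compProd
  rw [Measure.integral_compProd hf, Policy.integral_joint _ _ hint]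

end ContextualBandit

section DoublyRobust

variable {X A : Type*} [MeasurableSpace X] [Fintype A] {μp πp : Policy X A} {rhat : X × A → ℝ}

noncomputable def drTerm (μp πp : Policy X A) (rhat : X × A → ℝ) (s : (X × A) × ℝ) : ℝ :=
  impW μp πp s.1 * (s.2 - rhat s.1) + ∑ a, πp.prob s.1.1 a * rhat (s.1.1, a)

lemma drTerm_eq (p : X × A) (r : ℝ) :
    drTerm μp πp rhat (p, r)
      = impW μp πp p * r + (∑ b, πp.prob p.1 b * rhat (p.1, b) - impW μp πp p * rhat p) := by
  rw [drTerm]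
  ring

variable [MeasurableSpace A] {D : Kernel (X × A) ℝ} [IsMarkovKernel D]

lemma sum_prob_mul_integral_drTerm (habs : ∀ x a, 0 < πp.prob x a → 0 < μp.prob x a)
    (hD : ∀ p, Integrable id (D p)) (x : X) :
    ∑ a, μp.prob x a * ∫ r, drTerm μp πp rhat ((x, a), r) ∂D (x, a)
      = ∑ a, πp.prob x a * rstar D (x, a) := by
  simp_rw [drTerm_eq, integral_const_mul_add (Y := fun r => r) (hD _)]
  have hsplit (a : A) : μp.prob x a * (impW μp πp (x, a) * ∫ r, r ∂D (x, a)
        + (∑ b, πp.prob x b * rhat (x, b) - impW μp πp (x, a) * rhat (x, a)))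
      = μp.prob x a * (impW μp πp (x, a) * (rstar D (x, a) - rhat (x, a)))
        + (∑ b, πp.prob x b * rhat (x, b)) * μp.prob x a := by
    rw [rstar]
    ring
  simp_rw [hsplit]
  rw [Finset.sum_add_distrib, ← Finset.mul_sum, μp.sum_one, mul_one,
    Policy.sum_prob_mul_impW_mul habs, ← Finset.sum_add_distrib]
  congr 1 with a
  ring

lemma sum_prob_mul_integral_drTerm_sq (habs : ∀ x a, 0 < πp.prob x a → 0 < μp.prob x a)
    (hD : ∀ p, MemLp id 2 (D p)) (x : X) :
    ∑ a, μp.prob x a * ∫ r, drTerm μp πp rhat ((x, a), r) ^ 2 ∂D (x, a)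
      = ∑ a, μp.prob x a * (impW μp πp (x, a) ^ 2 * variance id (D (x, a)))
        + ((∑ a, μp.prob x a * (impW μp πp (x, a) * (rhat (x, a) - rstar D (x, a))) ^ 2)
            - (∑ a, μp.prob x a * (impW μp πp (x, a) * (rhat (x, a) - rstar D (x, a)))) ^ 2)
        + (∑ a, πp.prob x a * rstar D (x, a)) ^ 2 := by
  simp_rw [drTerm_eq, integral_const_mul_add_sq (Y := fun r => r) (hD _)]
  have hsplit (a : A) : μp.prob x a * (impW μp πp (x, a) ^ 2 * variance (fun r => r) (D (x, a))
        + (impW μp πp (x, a) * ∫ r, r ∂D (x, a)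
          + (∑ b, πp.prob x b * rhat (x, b) - impW μp πp (x, a) * rhat (x, a))) ^ 2)
      = μp.prob x a * (impW μp πp (x, a) ^ 2 * variance (fun r => r) (D (x, a)))
        + μp.prob x a * (∑ b, πp.prob x b * rhat (x, b)
          - impW μp πp (x, a) * (rhat (x, a) - rstar D (x, a))) ^ 2 := by
    rw [rstar]
    ring
  have hmodel : ∑ b, πp.prob x b * rhat (x, b)
      - ∑ a, μp.prob x a * (impW μp πp (x, a) * (rhat (x, a) - rstar D (x, a)))
      = ∑ a, πp.prob x a * rstar D (x, a) := by
    rw [Policy.sum_prob_mul_impW_mul habs, sub_eq_iff_eq_add, ← Finset.sum_add_distrib]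
    congr 1 with a
    ring
  simp_rw [hsplit]
  rw [Finset.sum_add_distrib, Finset.sum_mul_sub_sq_eq _ (μp.sum_one x), hmodel, add_assoc]
  rfl -- `variance (fun r => r)` against `variance id`

variable [MeasurableSingletonClass A] (lam : Measure X)

lemma integral_drTerm [SFinite lam] (habs : ∀ x a, 0 < πp.prob x a → 0 < μp.prob x a)
    (hD : ∀ p, Integrable id (D p))
    (hf : Integrable (drTerm μp πp rhat) (sampleMeasure lam μp D)) :
    ∫ s, drTerm μp πp rhat s ∂sampleMeasure lam μp D = vpi lam πp D := by
  rw [vpi, integral_sampleMeasure _ _ _ hf]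
  simp_rw [sum_prob_mul_integral_drTerm habs hD]

lemma variance_drTerm [IsProbabilityMeasure lam]
    (habs : ∀ x a, 0 < πp.prob x a → 0 < μp.prob x a) (hD : ∀ p, MemLp id 2 (D p))
    (hf : MemLp (drTerm μp πp rhat) 2 (sampleMeasure lam μp D))
    (h2 : MemLp (fun x => ∑ a, μp.prob x a * (impW μp πp (x, a) * rstar D (x, a))) 2 lam)
    (h3 : Integrable (fun x => ∑ a, μp.prob x a *
      (impW μp πp (x, a) ^ 2 * variance id (D (x, a)))) lam)
    (h4 : Integrable (fun x =>
      (∑ a, μp.prob x a * (impW μp πp (x, a) * (rhat (x, a) - rstar D (x, a))) ^ 2)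
        - (∑ a, μp.prob x a * (impW μp πp (x, a) * (rhat (x, a) - rstar D (x, a)))) ^ 2) lam) :
    variance (drTerm μp πp rhat) (sampleMeasure lam μp D)
      = Emu lam μp (fun p => impW μp πp p ^ 2 * variance id (D p))
          + variance (fun x => ∑ a, μp.prob x a * (impW μp πp (x, a) * rstar D (x, a))) lam
          + ∫ x,
              ((∑ a, μp.prob x a * (impW μp πp (x, a) * (rhat (x, a) - rstar D (x, a))) ^ 2)
                - (∑ a, μp.prob x a *
                    (impW μp πp (x, a) * (rhat (x, a) - rstar D (x, a)))) ^ 2) ∂lam := by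
  have hvalue : (fun x => ∑ a, μp.prob x a * (impW μp πp (x, a) * rstar D (x, a)))
      = fun x => ∑ a, πp.prob x a * rstar D (x, a) :=
    funext fun x => Policy.sum_prob_mul_impW_mul habs x _
  rw [hvalue] at h2 ⊢
  have hsq : ∫ s, (drTerm μp πp rhat ^ 2) s ∂sampleMeasure lam μp D
      = Emu lam μp (fun p => impW μp πp p ^ 2 * variance id (D p))
        + ∫ x,
            ((∑ a, μp.prob x a * (impW μp πp (x, a) * (rhat (x, a) - rstar D (x, a))) ^ 2)
              - (∑ a, μp.prob x a *
                  (impW μp πp (x, a) * (rhat (x, a) - rstar D (x, a)))) ^ 2) ∂lam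
        + ∫ x, (∑ a, πp.prob x a * rstar D (x, a)) ^ 2 ∂lam := by
    simp_rw [Pi.pow_apply]
    rw [integral_sampleMeasure _ _ _ hf.integrable_sq]
    simp_rw [sum_prob_mul_integral_drTerm_sq habs hD]
    rw [integral_add ?_ h2.integrable_sq, integral_add h3 h4]
    · rfl
    · exact h3.add h4
  rw [variance_eq_sub hf, variance_eq_sub h2, hsq,
    integral_drTerm lam habs (fun p => (hD p).integrable one_le_two) (hf.integrable one_le_two),
    vpi]
  simp only [Pi.pow_apply]
  ring

end DoublyRobust

theorem dr_mse_general
    (lam : Measure X) [IsProbabilityMeasure lam] (μp πp : Policy X A)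
    (habs : ∀ x a, 0 < πp.prob x a → 0 < μp.prob x a)
    (D : Kernel (X × A) ℝ) [IsMarkovKernel D]
    (hD2 : ∀ p, Integrable (fun r => r ^ 2) (D p))
    (rhat : X × A → ℝ)
    (n : ℕ) (hn : 0 < n)
    (h1 : MemLp (fun s : (X × A) × ℝ => impW μp πp s.1 * (s.2 - rhat s.1)
        + ∑ a, πp.prob s.1.1 a * rhat (s.1.1, a)) 2 (sampleMeasure lam μp D))
    (h2 : MemLp (fun x => ∑ a, μp.prob x a * (impW μp πp (x, a) * rstar D (x, a))) 2 lam)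
    (h3 : Integrable (fun x => ∑ a, μp.prob x a *
      (impW μp πp (x, a) ^ 2 * variance id (D (x, a)))) lam)
    (h4 : Integrable (fun x =>
      (∑ a, μp.prob x a * (impW μp πp (x, a) * (rhat (x, a) - rstar D (x, a))) ^ 2)
        - (∑ a, μp.prob x a * (impW μp πp (x, a) * (rhat (x, a) - rstar D (x, a)))) ^ 2) lam) :
    (∫ ω, (drEst μp πp rhat n ω - vpi lam πp D) ^ 2
        ∂(Measure.pi fun _ : Fin n => sampleMeasure lam μp D))
      = (1 / n) *
        (Emu lam μp (fun p => impW μp πp p ^ 2 * variance id (D p))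
          + variance (fun x => ∑ a, μp.prob x a * (impW μp πp (x, a) * rstar D (x, a))) lam
          + ∫ x,
              ((∑ a, μp.prob x a * (impW μp πp (x, a) * (rhat (x, a) - rstar D (x, a))) ^ 2)
                - (∑ a, μp.prob x a *
                    (impW μp πp (x, a) * (rhat (x, a) - rstar D (x, a)))) ^ 2) ∂lam) := by
  have hD : ∀ p, MemLp id 2 (D p) := fun p =>
    (memLp_two_iff_integrable_sq aestronglyMeasurable_id).2 (hD2 p)
  have hmse := integral_sampleMean_sub_sq (f := drTerm μp πp rhat) h1 hn.ne'
  rw [integral_drTerm lam habs (fun p => (hD p).integrable one_le_two)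
    (h1.integrable one_le_two), variance_drTerm lam habs hD h1 h2 h3 h4] at hmse
  rw [one_div_mul_eq_div]
  exact hmse

/-- Lemma 3.3(i) of Dudík et al.: exact MSE of the DR estimator. -/
theorem dr_mse
    (lam : Measure X) [IsProbabilityMeasure lam] (μp πp : Policy X A)
    (habs : ∀ x a, 0 < πp.prob x a → 0 < μp.prob x a)
    (D : Kernel (X × A) ℝ) [IsMarkovKernel D]
    (hD2 : ∀ p, Integrable (fun r => r ^ 2) (D p))
    (rhat : X × A → ℝ) (hrm : Measurable rhat)
    (n : ℕ) (hn : 0 < n)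
    (h1 : MemLp (fun s : (X × A) × ℝ => impW μp πp s.1 * (s.2 - rhat s.1)
        + ∑ a, πp.prob s.1.1 a * rhat (s.1.1, a)) 2 (sampleMeasure lam μp D))
    (h2 : MemLp (fun x => ∑ a, μp.prob x a * (impW μp πp (x, a) * rstar D (x, a))) 2 lam)
    (h3 : Integrable (fun x => ∑ a, μp.prob x a *
      (impW μp πp (x, a) ^ 2 * variance id (D (x, a)))) lam)
    (h4 : Integrable (fun x =>
      (∑ a, μp.prob x a * (impW μp πp (x, a) * (rhat (x, a) - rstar D (x, a))) ^ 2)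
        - (∑ a, μp.prob x a * (impW μp πp (x, a) * (rhat (x, a) - rstar D (x, a)))) ^ 2) lam)
    (hvpi : Integrable (fun x => ∑ a, πp.prob x a * rstar D (x, a)) lam)
    (hsq : Integrable (fun ω => (drEst μp πp rhat n ω - vpi lam πp D) ^ 2)
      (Measure.pi fun _ : Fin n => sampleMeasure lam μp D)) :
    (∫ ω, (drEst μp πp rhat n ω - vpi lam πp D) ^ 2
        ∂(Measure.pi fun _ : Fin n => sampleMeasure lam μp D))
      = (1 / n) *
        (Emu lam μp (fun p => impW μp πp p ^ 2 * variance id (D p))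
          + variance (fun x => ∑ a, μp.prob x a * (impW μp πp (x, a) * rstar D (x, a))) lam
          + ∫ x,
              ((∑ a, μp.prob x a * (impW μp πp (x, a) * (rhat (x, a) - rstar D (x, a))) ^ 2)
                - (∑ a, μp.prob x a *
                    (impW μp πp (x, a) * (rhat (x, a) - rstar D (x, a)))) ^ 2) ∂lam) :=
  dr_mse_general lam μp πp habs D hD2 rhat n hn h1 h2 h3 h4
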